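/- arXiv:1809.02013 — 3 statements merged into one kernel-verified Lean document; each statement's English description precedes it below -/
import Mathlib

section
/- In the bimatrix game with J1(Permit,NOP)=0, J1(Permit,Escalate)=-r1, J1(Restrict,NOP)=0, J1(Restrict,Escalate)=r3, J2(Permit,NOP)=0, J2(Permit,Escalate)=r2, J2(Restrict,NOP)=0, J2(Restrict,Escalate)=-r4, where r1,r2,r3,r4>0, a mixed-strategy pair ((1-p,p),(1-q,q)) (p = probability P1 plays Restrict, q = probability P2 plays Escalate) is a Nash equilibrium if and only if q = 0 and p ≥ r2/(r2+r4). -/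
/-- Characterization of the mixed Nash equilibria of the Table 1 game:
p = probability of Restrict, q = probability of Escalate. -/
theorem stmt1 (r1 r2 r3 r4 : ℝ) (h1 : 0 < r1) (h2 : 0 < r2) (h3 : 0 < r3) (h4 : 0 < r4)
    (p q : ℝ) (hp0 : 0 ≤ p) (hp1 : p ≤ 1) (hq0 : 0 ≤ q) (hq1 : q ≤ 1) :
    ((∀ p' : ℝ, 0 ≤ p' → p' ≤ 1 →
        (1 - p') * q * (-r1) + p' * q * r3 ≤ (1 - p) * q * (-r1) + p * q * r3) ∧
     (∀ q' : ℝ, 0 ≤ q' → q' ≤ 1 →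
        (1 - p) * q' * r2 + p * q' * (-r4) ≤ (1 - p) * q * r2 + p * q * (-r4)))
    ↔ (q = 0 ∧ p ≥ r2 / (r2 + r4)) := by
  constructor
  · rintro ⟨hA, hB⟩
    have hq : q = 0 := by
      by_contra hq
      have hqpos : 0 < q := lt_of_le_of_ne hq0 (Ne.symm hq)
      have hp : p = 1 := by
        have := hA 1 zero_le_one le_rfl
        nlinarith [mul_pos hqpos (add_pos h1 h3)]
      have := hB 0 le_rfl zero_le_one
      rw [hp] at this
      nlinarith
    subst hq
    refine ⟨rfl, ?_⟩
    have := hB 1 zero_le_one le_rfl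
    rw [ge_iff_le, div_le_iff₀ (by linarith)]
    nlinarith
  · rintro ⟨hq, hp⟩
    subst hq
    rw [ge_iff_le, div_le_iff₀ (by linarith)] at hp
    constructor
    · intro p' _ _; nlinarith
    · intro q' hq0' hq1'; nlinarith
end

section
/- In the static Bayesian game of Table 2, where the attacker type θ^b gives payoffs (0,0) for (Permit,NOP), (-r2,r2) for (Permit,Escalate), (0,0) for (Restrict,NOP), (r0,-r0) for (Restrict,Escalate), and the legitimate type θ^g gives payoffs (0,0), (r1,r1), (0,0), (-r1,-r1) respectively, with r0,r1,r2 > 0 and defender's prior belief b(θ^b)=b(θ^g)=1/2: the strategy profile in which the defender plays Restrict with probability s* = r2/(r0+r2), the legitimate type always Escalates, and the adversarial type Escalates with probability q* = 2r1/(r0+r2) is a Bayesian Nash equilibrium, provided 2r1 ≤ r0+r2 and r1(1 - s*) > r1·s* (i.e., s* < 1/2). -/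
/-- The profile (defender Restricts with prob s* = r2/(r0+r2), legitimate type
always Escalates, adversarial type Escalates with prob q* = 2r1/(r0+r2)) is a
Bayesian Nash equilibrium of the Table 2 game with uniform prior. -/
theorem stmt5 (r0 r1 r2 : ℝ) (h0 : 0 < r0) (h1 : 0 < r1) (h2 : 0 < r2)
    (hq : 2 * r1 ≤ r0 + r2)
    (hs : r1 * (1 - r2 / (r0 + r2)) > r1 * (r2 / (r0 + r2))) :
    -- defender best responds (expected payoff averaged over the uniform prior)
    (∀ s' : ℝ, 0 ≤ s' → s' ≤ 1 →
      (1/2) * ((2 * r1 / (r0 + r2)) * ((1 - s') * (-r2) + s' * r0)) +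
        (1/2) * ((1 - s') * r1 + s' * (-r1)) ≤
      (1/2) * ((2 * r1 / (r0 + r2)) * ((1 - r2 / (r0 + r2)) * (-r2) + (r2 / (r0 + r2)) * r0)) +
        (1/2) * ((1 - r2 / (r0 + r2)) * r1 + (r2 / (r0 + r2)) * (-r1))) ∧
    -- the adversarial type best responds with q* = 2r1/(r0+r2)
    (∀ q' : ℝ, 0 ≤ q' → q' ≤ 1 →
      q' * ((1 - r2 / (r0 + r2)) * r2 + (r2 / (r0 + r2)) * (-r0)) ≤
      (2 * r1 / (r0 + r2)) * ((1 - r2 / (r0 + r2)) * r2 + (r2 / (r0 + r2)) * (-r0))) ∧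
    -- the legitimate type best responds by always Escalating
    (∀ q' : ℝ, 0 ≤ q' → q' ≤ 1 →
      q' * ((1 - r2 / (r0 + r2)) * r1 + (r2 / (r0 + r2)) * (-r1)) ≤
      1 * ((1 - r2 / (r0 + r2)) * r1 + (r2 / (r0 + r2)) * (-r1))) := by
  have hsum : (0:ℝ) < r0 + r2 := by linarith
  have hne : r0 + r2 ≠ 0 := ne_of_gt hsum
  refine ⟨?_, ?_, ?_⟩
  · intro s' hs0 hs1
    apply le_of_eq
    field_simp
    ring
  · intro q' hq0 hq1
    have key : (1 - r2 / (r0 + r2)) * r2 + (r2 / (r0 + r2)) * (-r0) = 0 := by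
      field_simp; ring
    rw [key]; simp
  · intro q' hq0 hq1
    have key : 0 ≤ (1 - r2 / (r0 + r2)) * r1 + (r2 / (r0 + r2)) * (-r1) := by
      nlinarith
    nlinarith
end

section
/- Mangasarian–Stone characterization (static, complete-information case of Theorem 2): a mixed-strategy pair (σ1*, σ2*) of a finite bimatrix game (J1, J2) is a Nash equilibrium if and only if there exist scalars s*, w* such that (σ1*, σ2*, s*, w*) maximizes Σ_{a1,a2} σ1(a1)σ2(a2)[J1(a1,a2)+J2(a1,a2)] + s + w subject to Σ_{a1} σ1(a1)J2(a1,a2) ≤ -w for all a2, Σ_{a2} σ2(a2)J1(a1,a2) ≤ -s for all a1, and σ1 ∈ ΔA1, σ2 ∈ ΔA2, and at the optimum the objective value equals 0. -/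
open Finset

/-- A mixed-strategy Nash equilibrium of a finite bimatrix game. -/
def IsMixedNE {A1 A2 : Type*} [Fintype A1] [Fintype A2]
    (G1 G2 : A1 → A2 → ℝ) (σ1 : A1 → ℝ) (σ2 : A2 → ℝ) : Prop :=
  (∀ a, 0 ≤ σ1 a) ∧ (∑ a, σ1 a = 1) ∧ (∀ a, 0 ≤ σ2 a) ∧ (∑ a, σ2 a = 1) ∧
  (∀ τ1 : A1 → ℝ, (∀ a, 0 ≤ τ1 a) → ∑ a, τ1 a = 1 →
    ∑ a1, ∑ a2, τ1 a1 * σ2 a2 * G1 a1 a2 ≤ ∑ a1, ∑ a2, σ1 a1 * σ2 a2 * G1 a1 a2) ∧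
  (∀ τ2 : A2 → ℝ, (∀ a, 0 ≤ τ2 a) → ∑ a, τ2 a = 1 →
    ∑ a1, ∑ a2, σ1 a1 * τ2 a2 * G2 a1 a2 ≤ ∑ a1, ∑ a2, σ1 a1 * σ2 a2 * G2 a1 a2)

/-- Feasibility for the Mangasarian–Stone bilinear program. -/
def MSFeasible {A1 A2 : Type*} [Fintype A1] [Fintype A2]
    (J1 J2 : A1 → A2 → ℝ) (σ1 : A1 → ℝ) (σ2 : A2 → ℝ) (s w : ℝ) : Prop :=
  (∀ a, 0 ≤ σ1 a) ∧ (∑ a, σ1 a = 1) ∧ (∀ a, 0 ≤ σ2 a) ∧ (∑ a, σ2 a = 1) ∧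
  (∀ a2, ∑ a1, σ1 a1 * J2 a1 a2 ≤ -w) ∧
  (∀ a1, ∑ a2, σ2 a2 * J1 a1 a2 ≤ -s)

/-- Objective of the Mangasarian–Stone bilinear program. -/
def MSObj {A1 A2 : Type*} [Fintype A1] [Fintype A2]
    (J1 J2 : A1 → A2 → ℝ) (σ1 : A1 → ℝ) (σ2 : A2 → ℝ) (s w : ℝ) : ℝ :=
  (∑ a1, ∑ a2, σ1 a1 * σ2 a2 * (J1 a1 a2 + J2 a1 a2)) + s + w

/-!
Against a fixed opponent, a mixed strategy's payoff is an average of pure-strategy payoffs, so a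
bound holds for all mixed deviations iff it holds for all pure ones. Thus the constraints say that
`-s` and `-w` bound every payoff either player can get against the other's strategy; in particular
the objective, the sum of the two slacks, is `≤ 0` on the feasible set. It vanishes exactly when
`-s` and `-w` are the payoffs of `(σ1, σ2)` itself, i.e. when no deviation improves on them.
-/

section WeightedSum

variable {ι R : Type*} [Fintype ι] [Semiring R] [PartialOrder R] [IsOrderedRing R]

lemma sum_mul_le_of_forall_le {τ f : ι → R} {c : R} (hτ : ∀ i, 0 ≤ τ i)
    (hτs : ∑ i, τ i = 1) (hf : ∀ i, f i ≤ c) : ∑ i, τ i * f i ≤ c :=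
  calc ∑ i, τ i * f i ≤ ∑ i, τ i * c :=
        sum_le_sum fun i _ => mul_le_mul_of_nonneg_left (hf i) (hτ i)
    _ = c := by rw [← sum_mul, hτs, one_mul]

end WeightedSum

section Bimatrix

variable {A1 A2 : Type*} [Fintype A1] [Fintype A2]

lemma sum_sum_mul_eq_sum_mul_row (G : A1 → A2 → ℝ) (τ1 : A1 → ℝ) (τ2 : A2 → ℝ) :
    ∑ a1, ∑ a2, τ1 a1 * τ2 a2 * G a1 a2 = ∑ a1, τ1 a1 * ∑ a2, τ2 a2 * G a1 a2 := by
  simp only [mul_sum, mul_assoc]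

lemma sum_sum_mul_eq_sum_mul_col (G : A1 → A2 → ℝ) (τ1 : A1 → ℝ) (τ2 : A2 → ℝ) :
    ∑ a1, ∑ a2, τ1 a1 * τ2 a2 * G a1 a2 = ∑ a2, τ2 a2 * ∑ a1, τ1 a1 * G a1 a2 := by
  rw [sum_comm]
  simp only [mul_sum]
  exact sum_congr rfl fun _ _ => sum_congr rfl fun _ _ => by ring

lemma isProb_single {A : Type*} [Fintype A] [DecidableEq A] (a : A) :
    (∀ b, 0 ≤ (Pi.single a 1 : A → ℝ) b) ∧ ∑ b, (Pi.single a 1 : A → ℝ) b = 1 :=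
  ⟨(Pi.single_nonneg.2 zero_le_one : (0 : A → ℝ) ≤ Pi.single a 1), by simp [Pi.single_apply]⟩

lemma forall_mixed_le_iff_forall_pure_le_left (G : A1 → A2 → ℝ) (σ2 : A2 → ℝ) (c : ℝ) :
    (∀ τ1 : A1 → ℝ, (∀ a, 0 ≤ τ1 a) → ∑ a, τ1 a = 1 →
      ∑ a1, ∑ a2, τ1 a1 * σ2 a2 * G a1 a2 ≤ c) ↔
    ∀ a1, ∑ a2, σ2 a2 * G a1 a2 ≤ c := by
  classical
  refine ⟨fun h a1 => ?_, fun h τ1 hτ1 hτ1s => ?_⟩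
  · have := h _ (isProb_single a1).1 (isProb_single a1).2
    simpa [sum_sum_mul_eq_sum_mul_row, Pi.single_apply] using this
  · rw [sum_sum_mul_eq_sum_mul_row]
    exact sum_mul_le_of_forall_le hτ1 hτ1s h

lemma forall_mixed_le_iff_forall_pure_le_right (G : A1 → A2 → ℝ) (σ1 : A1 → ℝ) (c : ℝ) :
    (∀ τ2 : A2 → ℝ, (∀ a, 0 ≤ τ2 a) → ∑ a, τ2 a = 1 →
      ∑ a1, ∑ a2, σ1 a1 * τ2 a2 * G a1 a2 ≤ c) ↔
    ∀ a2, ∑ a1, σ1 a1 * G a1 a2 ≤ c := by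
  classical
  refine ⟨fun h a2 => ?_, fun h τ2 hτ2 hτ2s => ?_⟩
  · have := h _ (isProb_single a2).1 (isProb_single a2).2
    simpa [sum_sum_mul_eq_sum_mul_col, Pi.single_apply] using this
  · rw [sum_sum_mul_eq_sum_mul_col]
    exact sum_mul_le_of_forall_le hτ2 hτ2s h

lemma isMixedNE_iff_msFeasible (J1 J2 : A1 → A2 → ℝ) (σ1 : A1 → ℝ) (σ2 : A2 → ℝ) :
    IsMixedNE J1 J2 σ1 σ2 ↔ MSFeasible J1 J2 σ1 σ2
      (-∑ a1, ∑ a2, σ1 a1 * σ2 a2 * J1 a1 a2) (-∑ a1, ∑ a2, σ1 a1 * σ2 a2 * J2 a1 a2) := by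
  simp only [IsMixedNE, MSFeasible, neg_neg, forall_mixed_le_iff_forall_pure_le_left,
    forall_mixed_le_iff_forall_pure_le_right]
  tauto

lemma MSObj_eq (J1 J2 : A1 → A2 → ℝ) (τ1 : A1 → ℝ) (τ2 : A2 → ℝ) (s w : ℝ) :
    MSObj J1 J2 τ1 τ2 s w = ((∑ a1, ∑ a2, τ1 a1 * τ2 a2 * J1 a1 a2) + s)
      + ((∑ a1, ∑ a2, τ1 a1 * τ2 a2 * J2 a1 a2) + w) := by
  simp only [MSObj, mul_add, sum_add_distrib]
  ring

lemma MSObj_neg_payoffs (J1 J2 : A1 → A2 → ℝ) (τ1 : A1 → ℝ) (τ2 : A2 → ℝ) :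
    MSObj J1 J2 τ1 τ2 (-∑ a1, ∑ a2, τ1 a1 * τ2 a2 * J1 a1 a2)
      (-∑ a1, ∑ a2, τ1 a1 * τ2 a2 * J2 a1 a2) = 0 := by
  rw [MSObj_eq]
  ring

lemma payoffs_le_of_msFeasible {J1 J2 : A1 → A2 → ℝ} {τ1 : A1 → ℝ} {τ2 : A2 → ℝ} {s w : ℝ}
    (h : MSFeasible J1 J2 τ1 τ2 s w) :
    ∑ a1, ∑ a2, τ1 a1 * τ2 a2 * J1 a1 a2 ≤ -s ∧ ∑ a1, ∑ a2, τ1 a1 * τ2 a2 * J2 a1 a2 ≤ -w := by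
  obtain ⟨hτ1, hτ1s, hτ2, hτ2s, hw, hs⟩ := h
  exact ⟨(forall_mixed_le_iff_forall_pure_le_left J1 τ2 _).2 hs τ1 hτ1 hτ1s,
    (forall_mixed_le_iff_forall_pure_le_right J2 τ1 _).2 hw τ2 hτ2 hτ2s⟩

lemma MSObj_nonpos_of_msFeasible {J1 J2 : A1 → A2 → ℝ} {τ1 : A1 → ℝ} {τ2 : A2 → ℝ} {s w : ℝ}
    (h : MSFeasible J1 J2 τ1 τ2 s w) : MSObj J1 J2 τ1 τ2 s w ≤ 0 := by
  obtain ⟨h1, h2⟩ := payoffs_le_of_msFeasible h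
  rw [MSObj_eq]
  linarith

lemma eq_neg_payoffs_of_msFeasible_of_MSObj_eq_zero {J1 J2 : A1 → A2 → ℝ} {τ1 : A1 → ℝ}
    {τ2 : A2 → ℝ} {s w : ℝ} (h : MSFeasible J1 J2 τ1 τ2 s w) (h0 : MSObj J1 J2 τ1 τ2 s w = 0) :
    s = -∑ a1, ∑ a2, τ1 a1 * τ2 a2 * J1 a1 a2 ∧ w = -∑ a1, ∑ a2, τ1 a1 * τ2 a2 * J2 a1 a2 := by
  obtain ⟨h1, h2⟩ := payoffs_le_of_msFeasible h
  rw [MSObj_eq] at h0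
  constructor <;> linarith

end Bimatrix

theorem stmt15_general {A1 A2 : Type*} [Fintype A1] [Fintype A2]
    (J1 J2 : A1 → A2 → ℝ) (σ1 : A1 → ℝ) (σ2 : A2 → ℝ) :
    IsMixedNE J1 J2 σ1 σ2 ↔
    ∃ s w : ℝ, MSFeasible J1 J2 σ1 σ2 s w ∧
      (∀ (τ1 : A1 → ℝ) (τ2 : A2 → ℝ) (s' w' : ℝ), MSFeasible J1 J2 τ1 τ2 s' w' →
        MSObj J1 J2 τ1 τ2 s' w' ≤ MSObj J1 J2 σ1 σ2 s w) ∧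
      MSObj J1 J2 σ1 σ2 s w = 0 := by
  rw [isMixedNE_iff_msFeasible]
  constructor
  · intro hfeas
    refine ⟨_, _, hfeas, fun _ _ _ _ h => ?_, MSObj_neg_payoffs J1 J2 σ1 σ2⟩
    rw [MSObj_neg_payoffs]
    exact MSObj_nonpos_of_msFeasible h
  · rintro ⟨s, w, hfeas, -, hzero⟩
    obtain ⟨rfl, rfl⟩ := eq_neg_payoffs_of_msFeasible_of_MSObj_eq_zero hfeas hzero
    exact hfeas

/-- Mangasarian–Stone characterization of mixed Nash equilibria of a finite
bimatrix game by a bilinear program whose optimal value is 0. -/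
theorem stmt15 {A1 A2 : Type*} [Fintype A1] [Fintype A2]
    (J1 J2 : A1 → A2 → ℝ) (σ1 : A1 → ℝ) (σ2 : A2 → ℝ)
    (hσ1 : ∀ a, 0 ≤ σ1 a) (hσ1s : ∑ a, σ1 a = 1)
    (hσ2 : ∀ a, 0 ≤ σ2 a) (hσ2s : ∑ a, σ2 a = 1) :
    IsMixedNE J1 J2 σ1 σ2 ↔
    ∃ s w : ℝ, MSFeasible J1 J2 σ1 σ2 s w ∧
      (∀ (τ1 : A1 → ℝ) (τ2 : A2 → ℝ) (s' w' : ℝ), MSFeasible J1 J2 τ1 τ2 s' w' →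
        MSObj J1 J2 τ1 τ2 s' w' ≤ MSObj J1 J2 σ1 σ2 s w) ∧
      MSObj J1 J2 σ1 σ2 s w = 0 :=
  stmt15_general J1 J2 σ1 σ2
end
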